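/- Let Q = (Q_{x,y})_{x,y∈γ} be a matrix over a locally finite configuration γ ⊂ ℝ^d such that Q_{x,y} = 0 whenever |x−y| > ρ and |Q_{x,y}| ≤ C·n_x^k for constants C > 0, k ≥ 1, where n_x = #{y∈γ : |x−y| ≤ ρ}. Assume γ satisfies the logarithmic growth bound n_{x,R}(γ) ≤ a_R(1+log(1+|x|)) for all R, x. Then for every q ∈ (0,1) there exists a constant L > 0 such that for all α < β in a fixed bounded interval [α_*, α^*] and all z ∈ l¹_α: ‖Qz‖_{l¹_β} ≤ (L/(β−α)^q)·‖z‖_{l¹_α}, where (Qz)_x := ∑_{y∈γ} Q_{x,y} z_y and ‖z‖_{l¹_α} := ∑_{x∈γ} e^{-α|x|}|z_x|. -/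
import Mathlib

open Real Set

lemma key_aux (k : ℕ) (hk : 1 ≤ k) (q' S s t : ℝ) (hq0 : 0 < q') (hq1 : q' ≤ 1)
    (hs : 0 < s) (hsS : s ≤ S) (ht : 0 ≤ t) :
    (1 + Real.log (1 + t)) ^ k * Real.exp (-(s * t)) ≤
      ((1 + k / q') ^ k * Real.exp S) / s ^ q' := by
  have hk0 : 0 < (k : ℝ) := by exact_mod_cast hk
  have h1t : (1:ℝ) ≤ 1 + t := by linarith
  have h1tp : (0:ℝ) < 1 + t := by linarith
  have hε : 0 < q' / k := by positivity
  set u : ℝ := (1 + t) ^ (q' / (k:ℝ)) with hu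
  have hu1 : 1 ≤ u := Real.one_le_rpow h1t hε.le
  have hup : 0 < u := lt_of_lt_of_le one_pos hu1
  have hlog : Real.log (1 + t) ≤ ((k:ℝ) / q') * (u - 1) := by
    have h1 : Real.log u = (q' / k) * Real.log (1 + t) := Real.log_rpow h1tp _
    have h2 : Real.log u ≤ u - 1 := Real.log_le_sub_one_of_pos hup
    have h3 : Real.log (1 + t) = ((k:ℝ) / q') * Real.log u := by
      rw [h1]; field_simp
    rw [h3]
    have hkq : 0 ≤ (k:ℝ)/q' := by positivity
    nlinarith
  have hstep2 : (1 + Real.log (1 + t)) ≤ (1 + (k:ℝ)/q') * u := by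
    have hkq : 0 ≤ (k:ℝ)/q' := by positivity
    nlinarith
  have hbase : (0:ℝ) ≤ 1 + Real.log (1 + t) := by
    have := Real.log_nonneg h1t; linarith
  have hstep3 : (1 + Real.log (1 + t)) ^ k ≤ (1 + (k:ℝ)/q') ^ k * (1 + t) ^ q' := by
    calc (1 + Real.log (1 + t)) ^ k ≤ ((1 + (k:ℝ)/q') * u) ^ k :=
          pow_le_pow_left₀ hbase hstep2 k
      _ = (1 + (k:ℝ)/q') ^ k * u ^ k := mul_pow _ _ k
      _ = (1 + (k:ℝ)/q') ^ k * (1 + t) ^ q' := by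
          rw [hu, ← Real.rpow_natCast ((1+t) ^ (q'/(k:ℝ))) k, ← Real.rpow_mul h1tp.le]
          congr 2
          field_simp
  have hstep4 : (1 + t) ^ q' * Real.exp (-(s * t)) ≤ Real.exp S / s ^ q' := by
    have hxe : s * (1 + t) ≤ Real.exp (s * (1 + t)) := by
      have := Real.add_one_le_exp (s * (1 + t)); linarith
    have h1tle : 1 + t ≤ Real.exp (s * (1 + t)) / s := by
      rw [le_div_iff₀ hs]; linarith [hxe]
    have h4 : (1 + t) ^ q' ≤ (Real.exp (s * (1 + t)) / s) ^ q' :=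
      Real.rpow_le_rpow h1tp.le h1tle hq0.le
    have h5 : (Real.exp (s * (1 + t)) / s) ^ q' = Real.exp (s * (1 + t) * q') / s ^ q' := by
      rw [Real.div_rpow (Real.exp_nonneg _) hs.le, ← Real.exp_mul]
    have h6 : Real.exp (s * (1 + t) * q') * Real.exp (-(s * t)) ≤ Real.exp S := by
      rw [← Real.exp_add, Real.exp_le_exp]
      nlinarith [mul_nonneg hs.le ht]
    calc (1 + t) ^ q' * Real.exp (-(s * t))
        ≤ (Real.exp (s * (1 + t) * q') / s ^ q') * Real.exp (-(s * t)) := by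
          rw [← h5]; exact mul_le_mul_of_nonneg_right h4 (Real.exp_nonneg _)
      _ = (Real.exp (s * (1 + t) * q') * Real.exp (-(s * t))) / s ^ q' := by ring
      _ ≤ Real.exp S / s ^ q' := by gcongr
  calc (1 + Real.log (1 + t)) ^ k * Real.exp (-(s * t))
      ≤ ((1 + (k:ℝ)/q') ^ k * (1 + t) ^ q') * Real.exp (-(s * t)) :=
        mul_le_mul_of_nonneg_right hstep3 (Real.exp_nonneg _)
    _ = (1 + (k:ℝ)/q') ^ k * ((1 + t) ^ q' * Real.exp (-(s * t))) := by ring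
    _ ≤ (1 + (k:ℝ)/q') ^ k * (Real.exp S / s ^ q') := by
        apply mul_le_mul_of_nonneg_left hstep4
        positivity
    _ = ((1 + (k:ℝ)/q') ^ k * Real.exp S) / s ^ q' := by ring

set_option maxHeartbeats 2000000 in
/-- a finite-range matrix `Q` with `|Q_{x,y}| ≤ C n_x^k` over a
configuration `γ` with logarithmic growth of local particle numbers defines an
Ovsjannikov operator of every order `q < 1` on the scale of weighted `ℓ¹` spaces:
`‖Qz‖_{l¹_β} ≤ L (β-α)^{-q} ‖z‖_{l¹_α}` for `α_* ≤ α < β ≤ α^*`. -/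
theorem stmt6 (d : ℕ) (γ : Set (EuclideanSpace ℝ (Fin d)))
    (hloc : ∀ (x : EuclideanSpace ℝ (Fin d)) (r : ℝ), (γ ∩ Metric.closedBall x r).Finite)
    (hlog : ∀ R : ℝ, 0 < R → ∃ a : ℝ, ∀ x : EuclideanSpace ℝ (Fin d),
      ((γ ∩ Metric.closedBall x R).ncard : ℝ) ≤ a * (1 + Real.log (1 + ‖x‖)))
    (ρ : ℝ) (hρ : 0 < ρ)
    (Q : EuclideanSpace ℝ (Fin d) → EuclideanSpace ℝ (Fin d) → ℝ)
    (hQ0 : ∀ x y, ρ < dist x y → Q x y = 0)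
    (C : ℝ) (hC : 0 < C) (k : ℕ) (hk : 1 ≤ k)
    (hQbd : ∀ x y, |Q x y| ≤ C * ((γ ∩ Metric.closedBall x ρ).ncard : ℝ) ^ k)
    (αs αe : ℝ) (hαs : 0 ≤ αs) (hαe : αs < αe)
    (q : ℝ) (hq0 : 0 < q) (hq1 : q < 1) :
    ∃ L : ℝ, 0 < L ∧ ∀ α β : ℝ, αs ≤ α → α < β → β ≤ αe →
      ∀ z : γ → ℝ,
        Summable (fun x : γ => Real.exp (-α * ‖(x : EuclideanSpace ℝ (Fin d))‖) * |z x|) →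
        Summable (fun x : γ => Real.exp (-β * ‖(x : EuclideanSpace ℝ (Fin d))‖) *
          |∑' y : γ, Q x y * z y|) ∧
        (∑' x : γ, Real.exp (-β * ‖(x : EuclideanSpace ℝ (Fin d))‖) *
            |∑' y : γ, Q x y * z y|)
          ≤ (L / (β - α) ^ q) *
            ∑' x : γ, Real.exp (-α * ‖(x : EuclideanSpace ℝ (Fin d))‖) * |z x| := by
  classical
  obtain ⟨a, ha⟩ := hlog ρ hρ
  set a' : ℝ := max a 1 with ha'def
  have ha'1 : (1:ℝ) ≤ a' := le_max_right a 1
  have ha'0 : (0:ℝ) < a' := lt_of_lt_of_le one_pos ha'1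
  have hαe0 : 0 < αe := lt_of_le_of_lt hαs hαe
  have hone_log : ∀ t : ℝ, 0 ≤ t → 1 ≤ 1 + Real.log (1 + t) := by
    intro t ht
    have := Real.log_nonneg (by linarith : (1:ℝ) ≤ 1 + t)
    linarith
  have hn : ∀ x : EuclideanSpace ℝ (Fin d),
      ((γ ∩ Metric.closedBall x ρ).ncard : ℝ) ≤ a' * (1 + Real.log (1 + ‖x‖)) := by
    intro x
    refine (ha x).trans (mul_le_mul_of_nonneg_right (le_max_left a 1) ?_)
    have := hone_log ‖x‖ (norm_nonneg x); linarith
  have hq2 : 0 < q / 2 := by linarith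
  have hq21 : q / 2 ≤ 1 := by linarith
  set M1 : ℝ := (1 + (k:ℝ) / (q/2)) ^ k * Real.exp αe with hM1def
  set M2 : ℝ := (1 + 1 / (q/2)) * Real.exp αe with hM2def
  have hM1 : 0 < M1 := by positivity
  have hM2 : 0 < M2 := by positivity
  set N : ℝ := C * a' ^ k * M1 * (Real.exp (αe * (ρ/2)) * Real.exp (αe * ρ)) * (a' * M2)
    with hNdef
  have hN : 0 < N := by positivity
  refine ⟨2 * N, by positivity, ?_⟩
  intro α β hα hαβ hβ z hz
  have hα0 : 0 ≤ α := le_trans hαs hα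
  set δ : ℝ := β - α with hδdef
  have hδ : 0 < δ := by simp only [hδdef]; linarith
  set s : ℝ := δ / 2 with hsdef
  have hs : 0 < s := by positivity
  have hse : s ≤ αe := by
    simp only [hsdef, hδdef]; linarith
  set φ : γ → ℝ := fun y =>
    Real.exp (-(s * ‖(y : EuclideanSpace ℝ (Fin d))‖)) *
      (Real.exp (-α * ‖(y : EuclideanSpace ℝ (Fin d))‖) * |z y|) with hφdef
  have hφ0 : ∀ y, 0 ≤ φ y := fun y => by positivity
  set K1 : ℝ := C * a' ^ k * M1 / s ^ (q/2) with hK1def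
  set K : ℝ := K1 * (Real.exp (αe * (ρ/2)) * Real.exp (αe * ρ)) with hKdef
  set B : ℝ := a' * M2 / s ^ (q/2) with hBdef
  have hK1p : 0 < K1 := by positivity
  have hKp : 0 < K := by positivity
  have hBp : 0 < B := by positivity
  set V : γ × γ → ℝ := fun p =>
    if dist (p.1 : EuclideanSpace ℝ (Fin d)) (p.2 : EuclideanSpace ℝ (Fin d)) ≤ ρ
    then K * φ p.2 else 0 with hVdef
  have hV0 : ∀ p, 0 ≤ V p := by
    intro p
    simp only [hVdef]
    split
    · exact mul_nonneg hKp.le (hφ0 _)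
    · exact le_rfl
  -- finiteness of local sets
  have hfinD : ∀ w : γ, ({v : γ | dist (w : EuclideanSpace ℝ (Fin d)) (v : EuclideanSpace ℝ (Fin d)) ≤ ρ}).Finite := by
    intro w
    have h1 : ((Subtype.val) ⁻¹' (γ ∩ Metric.closedBall (w : EuclideanSpace ℝ (Fin d)) ρ) : Set γ).Finite :=
      (hloc w ρ).preimage (Subtype.val_injective.injOn)
    refine h1.subset ?_
    intro v hv
    simp only [Set.mem_setOf_eq] at hv
    exact ⟨v.2, by simpa [Metric.mem_closedBall, dist_comm] using hv⟩
  have himg : ∀ w : γ, Subtype.val ''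
      {v : γ | dist (w : EuclideanSpace ℝ (Fin d)) (v : EuclideanSpace ℝ (Fin d)) ≤ ρ}
      = γ ∩ Metric.closedBall (w : EuclideanSpace ℝ (Fin d)) ρ := by
    intro w
    ext p
    constructor
    · rintro ⟨v, hv, rfl⟩
      exact ⟨v.2, Metric.mem_closedBall.mpr (by rwa [dist_comm])⟩
    · rintro ⟨hp, hball⟩
      exact ⟨⟨p, hp⟩, by simpa [dist_comm] using Metric.mem_closedBall.mp hball, rfl⟩
  have hcardeq : ∀ w : γ, (((hfinD w).toFinset.card : ℝ))
      = ((γ ∩ Metric.closedBall (w : EuclideanSpace ℝ (Fin d)) ρ).ncard : ℝ) := by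
    intro w
    congr 1
    rw [← himg w, Set.ncard_image_of_injective _ Subtype.val_injective,
      Set.ncard_eq_toFinset_card _ (hfinD w)]
  -- key scalar bounds
  have key1 : ∀ t : ℝ, 0 ≤ t →
      (1 + Real.log (1 + t)) ^ k * Real.exp (-(s * t)) ≤ M1 / s ^ (q/2) := by
    intro t ht
    simpa [hM1def] using key_aux k hk (q/2) αe s t hq2 hq21 hs hse ht
  have key2 : ∀ t : ℝ, 0 ≤ t →
      (1 + Real.log (1 + t)) * Real.exp (-(s * t)) ≤ M2 / s ^ (q/2) := by
    intro t ht
    have := key_aux 1 le_rfl (q/2) αe s t hq2 hq21 hs hse ht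
    simpa [hM2def] using this
  -- main pointwise bound
  have hPV : ∀ x y : γ,
      Real.exp (-β * ‖(x : EuclideanSpace ℝ (Fin d))‖) * |Q x y * z y| ≤ V (x, y) := by
    intro x y
    by_cases hd : dist (x : EuclideanSpace ℝ (Fin d)) (y : EuclideanSpace ℝ (Fin d)) ≤ ρ
    · have hVxy : V (x, y) = K * φ y := by simp only [hVdef]; rw [if_pos hd]
      rw [hVxy]
      set t : ℝ := ‖(x : EuclideanSpace ℝ (Fin d))‖ with htdef
      set u : ℝ := ‖(y : EuclideanSpace ℝ (Fin d))‖ with hudef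
      have ht0 : 0 ≤ t := norm_nonneg _
      have hu0 : 0 ≤ u := norm_nonneg _
      have hut : u - ρ ≤ t := by
        have h1 : |t - u| ≤ dist (x : EuclideanSpace ℝ (Fin d)) (y : EuclideanSpace ℝ (Fin d)) := by
          rw [dist_eq_norm]; exact abs_norm_sub_norm_le _ _
        have h2 := abs_le.mp (h1.trans hd)
        linarith [h2.1]
      have hQ1 : |Q x y| * Real.exp (-(s * t)) ≤ K1 := by
        calc |Q (x : EuclideanSpace ℝ (Fin d)) (y : EuclideanSpace ℝ (Fin d))| * Real.exp (-(s * t))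
            ≤ (C * (a' * (1 + Real.log (1 + t))) ^ k) * Real.exp (-(s * t)) := by
              refine mul_le_mul_of_nonneg_right ((hQbd _ _).trans ?_) (Real.exp_nonneg _)
              exact mul_le_mul_of_nonneg_left
                (pow_le_pow_left₀ (Nat.cast_nonneg _) (hn _) k) hC.le
          _ = C * a' ^ k * ((1 + Real.log (1 + t)) ^ k * Real.exp (-(s * t))) := by
              rw [mul_pow]; ring
          _ ≤ C * a' ^ k * (M1 / s ^ (q/2)) := by
              refine mul_le_mul_of_nonneg_left (key1 t ht0) ?_
              positivity
          _ = K1 := by rw [hK1def]; ring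
      have hE1 : Real.exp (-(s * t)) ≤ Real.exp (αe * (ρ/2)) * Real.exp (-(s * u)) := by
        rw [← Real.exp_add, Real.exp_le_exp]
        have h1 : s * (u - t) ≤ s * ρ := mul_le_mul_of_nonneg_left (by linarith) hs.le
        have h2 : s * ρ ≤ (αe/2) * ρ := by
          refine mul_le_mul_of_nonneg_right ?_ hρ.le
          simp only [hsdef, hδdef]; linarith
        linarith
      have hE2 : Real.exp (-(α * t)) ≤ Real.exp (αe * ρ) * Real.exp (-(α * u)) := by
        rw [← Real.exp_add, Real.exp_le_exp]
        have h1 : α * (u - t) ≤ α * ρ := mul_le_mul_of_nonneg_left (by linarith) hα0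
        have h2 : α * ρ ≤ αe * ρ := mul_le_mul_of_nonneg_right (by linarith) hρ.le
        linarith
      have hsplit : Real.exp (-β * t) =
          Real.exp (-(s * t)) * Real.exp (-(s * t)) * Real.exp (-(α * t)) := by
        rw [← Real.exp_add, ← Real.exp_add]
        congr 1
        simp only [hsdef, hδdef]; ring
      calc Real.exp (-β * t) * |Q x y * z y|
          = (|Q (x:EuclideanSpace ℝ (Fin d)) (y:EuclideanSpace ℝ (Fin d))| * Real.exp (-(s * t)))
              * Real.exp (-(s * t)) * Real.exp (-(α * t)) * |z y| := by
            rw [hsplit, abs_mul]; ring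
        _ ≤ K1 * (Real.exp (αe * (ρ/2)) * Real.exp (-(s * u)))
              * (Real.exp (αe * ρ) * Real.exp (-(α * u))) * |z y| := by
            have e1 : (0:ℝ) ≤ |z y| := abs_nonneg _
            have e2 := Real.exp_nonneg (-(s*t))
            have e3 := Real.exp_nonneg (-(α*t))
            have e4 := Real.exp_nonneg (-(s*u))
            have e5 := Real.exp_nonneg (-(α*u))
            have e6 : (0:ℝ) ≤ Real.exp (αe*(ρ/2)) * Real.exp (-(s*u)) := by positivity
            gcongr
        _ = K * φ y := by
            simp only [hKdef, hφdef]
            rw [show Real.exp (-α * u) = Real.exp (-(α * u)) by ring_nf]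
            ring
    · -- far case
      have hq0' : Q (x : EuclideanSpace ℝ (Fin d)) (y : EuclideanSpace ℝ (Fin d)) = 0 :=
        hQ0 _ _ (not_le.mp hd)
      simp [hVdef, hd, hq0']
  -- counting identities
  have hVx0 : ∀ y : γ, ∀ x ∉ (hfinD y).toFinset, V (x, y) = 0 := by
    intro y x hx
    have hnd : ¬ dist (y : EuclideanSpace ℝ (Fin d)) (x : EuclideanSpace ℝ (Fin d)) ≤ ρ := by
      simpa [Set.Finite.mem_toFinset] using hx
    simp only [hVdef]
    rw [if_neg (by rwa [dist_comm] at hnd)]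
  have hsumx : ∀ y : γ, ∑' x : γ, V (x, y)
      = ((γ ∩ Metric.closedBall (y : EuclideanSpace ℝ (Fin d)) ρ).ncard : ℝ) * (K * φ y) := by
    intro y
    have hcongr : ∀ x ∈ (hfinD y).toFinset, V (x, y) = K * φ y := by
      intro x hx
      have hdc : dist (y : EuclideanSpace ℝ (Fin d)) (x : EuclideanSpace ℝ (Fin d)) ≤ ρ := by
        simpa [Set.Finite.mem_toFinset] using hx
      simp only [hVdef]
      rw [if_pos (by rwa [dist_comm] at hdc)]
    rw [tsum_eq_sum (hVx0 y), Finset.sum_congr rfl hcongr, Finset.sum_const, nsmul_eq_mul,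
      hcardeq y]
  have hcφ : ∀ y : γ,
      ((γ ∩ Metric.closedBall (y : EuclideanSpace ℝ (Fin d)) ρ).ncard : ℝ) * (K * φ y)
        ≤ (K * B) * (Real.exp (-α * ‖(y : EuclideanSpace ℝ (Fin d))‖) * |z y|) := by
    intro y
    set u : ℝ := ‖(y : EuclideanSpace ℝ (Fin d))‖ with hudef
    have hu0 : 0 ≤ u := norm_nonneg _
    have h1 : ((γ ∩ Metric.closedBall (y : EuclideanSpace ℝ (Fin d)) ρ).ncard : ℝ)
        * Real.exp (-(s * u)) ≤ B := by
      calc ((γ ∩ Metric.closedBall (y : EuclideanSpace ℝ (Fin d)) ρ).ncard : ℝ)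
            * Real.exp (-(s * u))
          ≤ (a' * (1 + Real.log (1 + u))) * Real.exp (-(s * u)) :=
            mul_le_mul_of_nonneg_right (hn _) (Real.exp_nonneg _)
        _ = a' * ((1 + Real.log (1 + u)) * Real.exp (-(s * u))) := by ring
        _ ≤ a' * (M2 / s ^ (q/2)) := mul_le_mul_of_nonneg_left (key2 u hu0) ha'0.le
        _ = B := by rw [hBdef]; ring
    calc ((γ ∩ Metric.closedBall (y : EuclideanSpace ℝ (Fin d)) ρ).ncard : ℝ) * (K * φ y)
        = K * (((γ ∩ Metric.closedBall (y : EuclideanSpace ℝ (Fin d)) ρ).ncard : ℝ)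
            * Real.exp (-(s * u))) * (Real.exp (-α * u) * |z y|) := by
          simp only [hφdef]; ring
      _ ≤ K * B * (Real.exp (-α * u) * |z y|) := by
          refine mul_le_mul_of_nonneg_right ?_ (by positivity)
          exact mul_le_mul_of_nonneg_left h1 hKp.le
  -- summability setup
  have hKBsum : Summable (fun y : γ =>
      (K * B) * (Real.exp (-α * ‖(y : EuclideanSpace ℝ (Fin d))‖) * |z y|)) := hz.mul_left _
  have hmargsum : Summable (fun y : γ =>
      ((γ ∩ Metric.closedBall (y : EuclideanSpace ℝ (Fin d)) ρ).ncard : ℝ) * (K * φ y)) := by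
    refine Summable.of_nonneg_of_le (fun y => ?_) (fun y => hcφ y) hKBsum
    positivity
  have hVswap : Summable (fun p : γ × γ => V (p.2, p.1)) := by
    rw [summable_prod_of_nonneg (fun p => hV0 _)]
    refine ⟨fun y => summable_of_ne_finset_zero (hVx0 y), ?_⟩
    exact hmargsum.congr (fun y => (hsumx y).symm)
  have hVsum : Summable V := ((Equiv.prodComm γ γ).summable_iff).mp hVswap
  have hVfst : Summable (fun x : γ => ∑' y : γ, V (x, y)) :=
    ((summable_prod_of_nonneg (fun p => hV0 p)).mp hVsum).2
  -- per-x inner sums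
  have hfinx : ∀ x : γ, ∀ y ∉ (hfinD x).toFinset, Q x y * z y = 0 := by
    intro x y hy
    have hnd : ¬ dist (x : EuclideanSpace ℝ (Fin d)) (y : EuclideanSpace ℝ (Fin d)) ≤ ρ := by
      simpa [Set.Finite.mem_toFinset] using hy
    rw [hQ0 _ _ (not_le.mp hnd), zero_mul]
  have hQabs : ∀ x : γ, Summable (fun y : γ => |Q x y * z y|) := by
    intro x
    refine summable_of_ne_finset_zero (s := (hfinD x).toFinset) ?_
    intro y hy
    rw [hfinx x y hy, abs_zero]
  have hfb_le : ∀ x : γ,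
      Real.exp (-β * ‖(x : EuclideanSpace ℝ (Fin d))‖) * |∑' y : γ, Q x y * z y|
        ≤ ∑' y : γ, V (x, y) := by
    intro x
    have h1 : |∑' y : γ, Q x y * z y| ≤ ∑' y : γ, |Q x y * z y| := by
      simpa only [Real.norm_eq_abs] using
        norm_tsum_le_tsum_norm (f := fun y : γ => Q x y * z y)
          (by simpa only [Real.norm_eq_abs] using hQabs x)
    calc Real.exp (-β * ‖(x : EuclideanSpace ℝ (Fin d))‖) * |∑' y : γ, Q x y * z y|
        ≤ Real.exp (-β * ‖(x : EuclideanSpace ℝ (Fin d))‖) * ∑' y : γ, |Q x y * z y| :=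
          mul_le_mul_of_nonneg_left h1 (Real.exp_nonneg _)
      _ = ∑' y : γ, Real.exp (-β * ‖(x : EuclideanSpace ℝ (Fin d))‖) * |Q x y * z y| :=
          (tsum_mul_left).symm
      _ ≤ ∑' y : γ, V (x, y) :=
          Summable.tsum_le_tsum (fun y => hPV x y) ((hQabs x).mul_left _) (hVsum.prod_factor x)
  have hfbsum : Summable (fun x : γ =>
      Real.exp (-β * ‖(x : EuclideanSpace ℝ (Fin d))‖) * |∑' y : γ, Q x y * z y|) :=
    Summable.of_nonneg_of_le (fun x => by positivity) hfb_le hVfst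
  refine ⟨hfbsum, ?_⟩
  -- the constant comparison
  have hKB' : K * B ≤ (2 * N) / δ ^ q := by
    have hss : s ^ (q/2) * s ^ (q/2) = s ^ q := by
      rw [← Real.rpow_add hs]; ring_nf
    have hspos : (0:ℝ) < s ^ (q/2) := Real.rpow_pos_of_pos hs _
    have hδq : (0:ℝ) < δ ^ q := Real.rpow_pos_of_pos hδ _
    have h2q : (2:ℝ) ^ q ≤ 2 := by
      calc (2:ℝ) ^ q ≤ (2:ℝ) ^ (1:ℝ) :=
            Real.rpow_le_rpow_of_exponent_le one_le_two hq1.le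
        _ = 2 := Real.rpow_one 2
    have hKBeq : K * B = N / s ^ q := by
      rw [← hss]
      simp only [hKdef, hK1def, hBdef, hNdef]
      field_simp
    have hsq : s ^ q = δ ^ q / 2 ^ q := by
      rw [hsdef, Real.div_rpow hδ.le (by norm_num)]
    have h2qpos : (0:ℝ) < 2 ^ q := Real.rpow_pos_of_pos two_pos q
    have heq : N / (δ ^ q / 2 ^ q) = N * 2 ^ q / δ ^ q := by
      field_simp
    rw [hKBeq, hsq, heq]
    have hnum : N * 2 ^ q ≤ 2 * N := by nlinarith [hN.le, h2q]
    exact (div_le_div_iff_of_pos_right hδq).mpr hnum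
  have hT0 : 0 ≤ ∑' x : γ, Real.exp (-α * ‖(x : EuclideanSpace ℝ (Fin d))‖) * |z x| :=
    tsum_nonneg (fun x => by positivity)
  calc (∑' x : γ, Real.exp (-β * ‖(x : EuclideanSpace ℝ (Fin d))‖) * |∑' y : γ, Q x y * z y|)
      ≤ ∑' x : γ, ∑' y : γ, V (x, y) := Summable.tsum_le_tsum hfb_le hfbsum hVfst
    _ = ∑' p : γ × γ, V p := (Summable.tsum_prod' hVsum (fun x => hVsum.prod_factor x)).symm
    _ = ∑' p : γ × γ, V (p.2, p.1) := ((Equiv.prodComm γ γ).tsum_eq V).symm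
    _ = ∑' y : γ, ∑' x : γ, V (x, y) :=
        Summable.tsum_prod' hVswap (fun y => summable_of_ne_finset_zero (hVx0 y))
    _ = ∑' y : γ, ((γ ∩ Metric.closedBall (y : EuclideanSpace ℝ (Fin d)) ρ).ncard : ℝ)
          * (K * φ y) := tsum_congr hsumx
    _ ≤ ∑' y : γ, (K * B) * (Real.exp (-α * ‖(y : EuclideanSpace ℝ (Fin d))‖) * |z y|) :=
        Summable.tsum_le_tsum hcφ hmargsum hKBsum
    _ = (K * B) * ∑' y : γ, Real.exp (-α * ‖(y : EuclideanSpace ℝ (Fin d))‖) * |z y| :=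
        tsum_mul_left
    _ ≤ ((2 * N) / δ ^ q) * ∑' x : γ, Real.exp (-α * ‖(x : EuclideanSpace ℝ (Fin d))‖) * |z x| :=
        mul_le_mul_of_nonneg_right hKB' hT0
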